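/- Let K be a nonempty closed convex subset of a uniformly convex real Banach space E with a partial order ≤ induced by a closed convex cone P, and let T : K → K be a monotone α-nonexpansive mapping for some α < 1. Assume x₀ ∈ K satisfies x₀ ≤ Tx₀ and the orbit O(x₀) = {Tⁿx₀ : n = 0, 1, 2, ...} is bounded in norm. If the norm is monotonic (‖x‖ ≤ ‖y‖ whenever 0 ≤ x ≤ y), then the sequence Tⁿx₀ converges weakly to a fixed point z of T with x₀ ≤ z. -/

import Mathlib

open Filter Topology

/-- A closed convex cone in a real normed space: nonempty, closed, not `{0}`,
pointed (`P ∩ (−P) = {0}`), and closed under nonnegative linear combinations. -/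
def IsClosedConvexCone {E : Type*} [NormedAddCommGroup E] [NormedSpace ℝ E]
    (P : Set E) : Prop :=
  P.Nonempty ∧ IsClosed P ∧ P ≠ {0} ∧ P ∩ (-P) = {0} ∧
    ∀ x ∈ P, ∀ y ∈ P, ∀ a b : ℝ, 0 ≤ a → 0 ≤ b → a • x + b • y ∈ P

/-- Weak convergence of a sequence: `f (x n) → f l` for every continuous
linear functional `f`. -/
def WeakConv {E : Type*} [NormedAddCommGroup E] [NormedSpace ℝ E]
    (x : ℕ → E) (l : E) : Prop :=
  ∀ f : E →L[ℝ] ℝ, Tendsto (fun n => f (x n)) atTop (𝓝 (f l))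

/-- `T` is monotone (w.r.t. the order `x ≤ y ↔ y - x ∈ P`) and α-nonexpansive
on `K`. -/
def MonotoneAlphaNonexpansive {E : Type*} [NormedAddCommGroup E] [NormedSpace ℝ E]
    (P K : Set E) (T : E → E) (α : ℝ) : Prop :=
  (∀ x ∈ K, ∀ y ∈ K, y - x ∈ P → T y - T x ∈ P) ∧
    ∀ x ∈ K, ∀ y ∈ K, y - x ∈ P →
      ‖T x - T y‖ ^ 2 ≤ α * ‖T x - y‖ ^ 2 + α * ‖T y - x‖ ^ 2
        + (1 - 2 * α) * ‖x - y‖ ^ 2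

/-!
Since `x₀ ≤ T x₀` and `T` is monotone, the orbit `xₙ = Tⁿ x₀` is increasing, so by
monotonicity of the norm `‖xₙ - x₀‖` increases to some `r`. If `‖xₙ - x_N‖ ≥ ε` with
`n ≥ N`, uniform convexity bounds `‖(xₙ - x₀) + (x_N - x₀)‖` by `2r - δ`, while this vector
dominates `2 (x_N - x₀)`; hence `‖x_N - x₀‖ ≤ r - δ/2`, impossible for large `N`. So the orbit
converges in norm to some `z`, which dominates every `xₙ` because the cone is closed.
Applying the α-nonexpansive inequality to `xₙ ≤ z` and letting `n → ∞` gives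
`(1 - α) ‖T z - z‖² ≤ 0`.
-/

section

variable {E : Type*} [NormedAddCommGroup E] [NormedSpace ℝ E] {P : Set E}

namespace IsClosedConvexCone

theorem add_mem (hP : IsClosedConvexCone P) {x y : E} (hx : x ∈ P) (hy : y ∈ P) :
    x + y ∈ P := by
  simpa using hP.2.2.2.2 x hx y hy 1 1 zero_le_one zero_le_one

theorem smul_mem (hP : IsClosedConvexCone P) {x : E} (hx : x ∈ P) {c : ℝ} (hc : 0 ≤ c) :
    c • x ∈ P := by
  simpa using hP.2.2.2.2 x hx x hx c 0 hc le_rfl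

theorem zero_mem (hP : IsClosedConvexCone P) : (0 : E) ∈ P := by
  obtain ⟨x, hx⟩ := hP.1
  simpa using hP.smul_mem hx le_rfl

theorem sub_mem_of_le (hP : IsClosedConvexCone P) {x : ℕ → E}
    (hx : ∀ n, x (n + 1) - x n ∈ P) {m n : ℕ} (hmn : m ≤ n) : x n - x m ∈ P := by
  induction n, hmn using Nat.le_induction with
  | base => simpa using hP.zero_mem
  | succ n _ ih => simpa using hP.add_mem (hx n) ih

theorem sub_mem_of_tendsto (hP : IsClosedConvexCone P) {x : ℕ → E}
    (hx : ∀ m n, m ≤ n → x n - x m ∈ P) {z : E} (hz : Tendsto x atTop (𝓝 z)) (n : ℕ) :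
    z - x n ∈ P :=
  hP.2.1.mem_of_tendsto (hz.sub_const (x n)) <|
    (eventually_ge_atTop n).mono fun _ hm => hx n _ hm

theorem two_mul_norm_le_norm_add (hP : IsClosedConvexCone P)
    (hnorm : ∀ x y : E, x ∈ P → y - x ∈ P → ‖x‖ ≤ ‖y‖) {u v : E} (hu : u ∈ P)
    (huv : v - u ∈ P) : 2 * ‖u‖ ≤ ‖u + v‖ := by
  have h := hnorm _ (u + v) (hP.smul_mem hu zero_le_two)
    (by rwa [two_smul, add_sub_add_left_eq_sub])
  rwa [norm_smul, Real.norm_two] at h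

theorem cauchySeq_of_monotone_of_bounded [UniformConvexSpace E] (hP : IsClosedConvexCone P)
    (hnorm : ∀ x y : E, x ∈ P → y - x ∈ P → ‖x‖ ≤ ‖y‖) {x : ℕ → E}
    (hx : ∀ m n, m ≤ n → x n - x m ∈ P) (hbdd : ∃ M, ∀ n, ‖x n‖ ≤ M) : CauchySeq x := by
  obtain ⟨M, hM⟩ := hbdd
  set a : ℕ → ℝ := fun n => ‖x n - x 0‖
  have ha_bdd : BddAbove (Set.range a) := ⟨M + ‖x 0‖, by
    rintro _ ⟨n, rfl⟩
    exact (norm_sub_le _ _).trans (by linarith [hM n])⟩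
  set r := ⨆ n, a n
  rw [Metric.cauchySeq_iff']
  intro ε hε
  obtain ⟨δ, hδ, hball⟩ := exists_forall_closed_ball_dist_add_le_two_mul_sub E hε r
  obtain ⟨N, hN⟩ := exists_lt_of_lt_ciSup (show r - δ / 2 < r by linarith)
  refine ⟨N, fun n hn => ?_⟩
  by_contra! hfar
  have hsum : ‖(x N - x 0) + (x n - x 0)‖ ≤ 2 * r - δ :=
    hball (le_ciSup ha_bdd N) (le_ciSup ha_bdd n)
      (by rwa [sub_sub_sub_cancel_right, norm_sub_rev, ← dist_eq_norm])
  have hmid : 2 * a N ≤ ‖(x N - x 0) + (x n - x 0)‖ :=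
    hP.two_mul_norm_le_norm_add hnorm (hx 0 N N.zero_le)
      (by simpa using hx N n hn)
  linarith

end IsClosedConvexCone

namespace MonotoneAlphaNonexpansive

variable {K : Set E} {T : E → E} {α : ℝ}

theorem iterate_succ_sub_mem (hT : MonotoneAlphaNonexpansive P K T α)
    (hTK : Set.MapsTo T K K) {x₀ : E} (hx₀ : x₀ ∈ K) (hinc : T x₀ - x₀ ∈ P) (n : ℕ) :
    T^[n + 1] x₀ - T^[n] x₀ ∈ P := by
  induction n with
  | zero => exact hinc
  | succ n ih =>
    simpa only [Function.iterate_succ_apply'] using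
      hT.1 _ (hTK.iterate n hx₀) _ (hTK.iterate (n + 1) hx₀) ih

theorem apply_eq_of_tendsto (hT : MonotoneAlphaNonexpansive P K T α) (hα : α < 1)
    {x : ℕ → E} (hxK : ∀ n, x n ∈ K) (hsucc : ∀ n, x (n + 1) = T (x n)) {z : E} (hzK : z ∈ K)
    (hxz : ∀ n, z - x n ∈ P) (hz : Tendsto x atTop (𝓝 z)) : T z = z := by
  have hz' : Tendsto (fun n => x (n + 1)) atTop (𝓝 z) := hz.comp (tendsto_add_atTop_nat 1)
  have hlhs := (hz'.sub_const (T z)).norm.pow 2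
  have hrhs := ((((hz'.sub_const z).norm.pow 2).const_mul α).add
    (((tendsto_const_nhds (x := T z)).sub hz).norm.pow 2 |>.const_mul α)).add
    (((hz.sub_const z).norm.pow 2).const_mul (1 - 2 * α))
  have hlim := le_of_tendsto_of_tendsto' hlhs hrhs fun n => by
    simpa only [hsucc] using hT.2 (x n) (hxK n) z hzK (hxz n)
  simp only [sub_self, norm_zero, norm_sub_rev z (T z)] at hlim
  have hsq : ‖T z - z‖ ^ 2 ≤ 0 := by nlinarith
  simpa [sub_eq_zero] using hsq

end MonotoneAlphaNonexpansive

theorem weakConv_of_tendsto {x : ℕ → E} {l : E} (hx : Tendsto x atTop (𝓝 l)) :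
    WeakConv x l :=
  fun f => (f.continuous.tendsto l).comp hx

end

theorem picard_weak_convergence_increasing_general
    {E : Type*} [NormedAddCommGroup E] [NormedSpace ℝ E]
    [UniformConvexSpace E] [CompleteSpace E]
    (P : Set E) (hP : IsClosedConvexCone P)
    (K : Set E) (hKcl : IsClosed K)
    (T : E → E) (hTK : ∀ x ∈ K, T x ∈ K)
    (α : ℝ) (hα : α < 1)
    (hT : MonotoneAlphaNonexpansive P K T α)
    (x₀ : E) (hx₀ : x₀ ∈ K) (hinc : T x₀ - x₀ ∈ P)
    (hbdd : ∃ M : ℝ, ∀ n : ℕ, ‖T^[n] x₀‖ ≤ M)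
    (hnorm : ∀ x y : E, x ∈ P → y - x ∈ P → ‖x‖ ≤ ‖y‖) :
    ∃ z ∈ K, T z = z ∧ z - x₀ ∈ P ∧ WeakConv (fun n => T^[n] x₀) z := by
  have hxK : ∀ n, T^[n] x₀ ∈ K := fun n => Set.MapsTo.iterate hTK n hx₀
  have hx : ∀ m n, m ≤ n → T^[n] x₀ - T^[m] x₀ ∈ P := fun _ _ =>
    hP.sub_mem_of_le (x := fun n => T^[n] x₀) (hT.iterate_succ_sub_mem hTK hx₀ hinc)
  obtain ⟨z, hz⟩ :=
    cauchySeq_tendsto_of_complete (hP.cauchySeq_of_monotone_of_bounded hnorm hx hbdd)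
  have hzK : z ∈ K := hKcl.mem_of_tendsto hz (.of_forall hxK)
  have hxz := hP.sub_mem_of_tendsto hx hz
  have hfix : T z = z := hT.apply_eq_of_tendsto hα hxK
    (fun n => Function.iterate_succ_apply' T n x₀) hzK hxz hz
  exact ⟨z, hzK, hfix, by simpa using hxz 0, weakConv_of_tendsto hz⟩

/-- If `x₀ ≤ T x₀`, the orbit of `x₀` is norm-bounded and the norm is
monotonic, then the Picard iterates converge weakly to a fixed point `z ≥ x₀`. -/
theorem picard_weak_convergence_increasing
    {E : Type*} [NormedAddCommGroup E] [NormedSpace ℝ E]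
    [UniformConvexSpace E] [CompleteSpace E]
    (P : Set E) (hP : IsClosedConvexCone P)
    (K : Set E) (hKne : K.Nonempty) (hKcl : IsClosed K) (hKco : Convex ℝ K)
    (T : E → E) (hTK : ∀ x ∈ K, T x ∈ K)
    (α : ℝ) (hα : α < 1)
    (hT : MonotoneAlphaNonexpansive P K T α)
    (x₀ : E) (hx₀ : x₀ ∈ K) (hinc : T x₀ - x₀ ∈ P)
    (hbdd : ∃ M : ℝ, ∀ n : ℕ, ‖T^[n] x₀‖ ≤ M)
    (hnorm : ∀ x y : E, x ∈ P → y - x ∈ P → ‖x‖ ≤ ‖y‖) :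
    ∃ z ∈ K, T z = z ∧ z - x₀ ∈ P ∧ WeakConv (fun n => T^[n] x₀) z :=
  picard_weak_convergence_increasing_general P hP K hKcl T hTK α hα hT x₀ hx₀ hinc hbdd hnorm
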